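/- Let α_j = (j+1)^{−α}, β_j = (j+1)^{−β} with 1 > α > β > 0, let q_1, q_2 > 0 and q_min = min{q_1, q_2}. Then for n ≥ n_0 + 1: (1) if n_0 ≥ 2^{1/(α−β)}, then Σ_{k=n_0+1}^n e^{−q_2 Σ_{j=k+1}^n β_j} β_k e^{−q_1 Σ_{j=n_0+1}^k α_j} ≤ (2e^{q_min/2}/q_min) e^{−q_min Σ_{j=n_0+1}^n α_j}; (2) for any u ∈ R^∞_+ that is β-moderate from n_0 onwards, Σ_{k=n_0+1}^n e^{−q_2 Σ_{j=k+1}^n β_j} β_k (α_{k−1}/β_{k−1}) u_{k−1} ≤ (2e^{q_2/2}/q_2) (α_{n−1}/β_{n−1}) u_{n−1}; (3) if n_0 ≥ (3α/q_2)^{1/(1−β)} − 2, then Σ_{k=n_0+1}^n e^{−q_2 Σ_{j=k+1}^n β_j} β_k ε^{(θ)}_{k−1} ≤ (2e^{q_2/2}/q_2) ε^{(θ)}_{n−1}. -/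

import Mathlib

/-!
Everything rests on one estimate: if `0 ≤ b_j ≤ 1` and `λ > 0`, then
`∑_{k=m}^n b_k e^{-λ ∑_{j=k+1}^n b_j} ≤ e^λ/λ`, by induction on `n` from
`x + e^{-λx} e^λ/λ ≤ e^λ/λ` for `x ∈ [0, 1]` (a Riemann sum of `∫ e^{-λt} dt`).
If a weight grows slowly, `w_j ≤ w_{j+1} e^{(q/2) b_{j+1}}`, then
`w_k ≤ w_n e^{(q/2) ∑_{j=k+1}^n b_j}`, and half of the decay `e^{-q ∑ b_j}` absorbs this growth.
In (1) the weight is `e^{-q_min ∑ α_j}`, which grows slowly because `α_j ≤ β_j/2` beyond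
`2^{1/(α-β)}`; in (2) slow growth is the moderation condition itself; in (3) it follows from
`(1 + 1/k)^{α/2} ≤ e^{α/(2k)}` and `α/k ≤ q₂ (k+2)^{-β}` beyond the threshold on `n₀`.
-/

open scoped BigOperators

noncomputable section

/-- Stepsizes `(n+1)^{-a}`. -/
def steps (a : ℝ) (n : ℕ) : ℝ := ((n : ℝ) + 1) ^ (-a)

/-- A positive sequence `u` is `β`-moderate (parameters `α, β, q₂`) from `k₀` onwards if
`u_k / u_{k+1} ≤ (α_{k+1}/α_k)(β_k/β_{k+1}) e^{(q₂/2) β_{k+2}}` for all `k ≥ k₀`. -/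
def BetaModerateFrom (α β q2 : ℝ) (u : ℕ → ℝ) (k0 : ℕ) : Prop :=
  ∀ k : ℕ, k0 ≤ k →
    u k / u (k + 1) ≤
      (steps α (k + 1) / steps α k) * (steps β k / steps β (k + 1)) *
        Real.exp (q2 / 2 * steps β (k + 2))

open Finset Real

lemma steps_pos (a : ℝ) (n : ℕ) : 0 < steps a n :=
  rpow_pos_of_pos (by positivity) _

lemma steps_le_one {a : ℝ} (ha : 0 ≤ a) (n : ℕ) : steps a n ≤ 1 :=
  rpow_le_one_of_one_le_of_nonpos (by simp) (by linarith)

lemma two_mul_steps_le_steps {a b : ℝ} (hba : b < a) {j : ℕ}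
    (hj : (2 : ℝ) ^ (1 / (a - b)) ≤ j + 1) : 2 * steps a j ≤ steps b j := by
  have hab : 0 < a - b := sub_pos.2 hba
  have h2 : 2 ≤ ((j : ℝ) + 1) ^ (a - b) :=
    (rpow_inv_le_iff_of_pos (by norm_num) (by positivity) hab).1 (by rwa [← one_div])
  have hsplit : steps b j = ((j : ℝ) + 1) ^ (a - b) * steps a j := by
    rw [steps, steps, ← rpow_add (by positivity)]
    ring_nf
  rw [hsplit]
  exact mul_le_mul_of_nonneg_right h2 (steps_pos a j).le

section ExponentialSums

variable {b : ℕ → ℝ}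

/-- Equivalent to `λx + e^{λ(1-x)} ≤ e^λ`, i.e. `λx ≤ e^{λ(1-x)} (e^{λx} - 1)`. -/
lemma add_exp_neg_mul_mul_le {lam x : ℝ} (hlam : 0 < lam) (hx0 : 0 ≤ x) (hx1 : x ≤ 1) :
    x + exp (-lam * x) * (exp lam / lam) ≤ exp lam / lam := by
  have hgrow : lam * x ≤ exp (lam * x) - 1 := by linarith [add_one_le_exp (lam * x)]
  have hone : 1 ≤ exp (lam * (1 - x)) := one_le_exp (by nlinarith)
  have hsplit : exp lam = exp (lam * (1 - x)) * exp (lam * x) := by rw [← exp_add]; ring_nf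
  have hdecay : exp (-lam * x) * exp lam = exp (lam * (1 - x)) := by rw [← exp_add]; ring_nf
  have hmain : lam * x + exp (-lam * x) * exp lam ≤ exp lam := by
    nlinarith [mul_le_mul hone hgrow (by nlinarith) (by positivity)]
  calc x + exp (-lam * x) * (exp lam / lam) = (lam * x + exp (-lam * x) * exp lam) / lam := by
        field_simp
    _ ≤ exp lam / lam := div_le_div_of_nonneg_right hmain hlam.le

lemma sum_mul_exp_neg_tail_le {lam : ℝ} (hlam : 0 < lam) (hb0 : ∀ j, 0 ≤ b j)
    (hb1 : ∀ j, b j ≤ 1) (m n : ℕ) :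
    ∑ k ∈ Icc m n, b k * exp (-lam * ∑ j ∈ Icc (k + 1) n, b j) ≤ exp lam / lam := by
  have hC : 0 ≤ exp lam / lam := by positivity
  induction n with
  | zero =>
    rcases Nat.eq_zero_or_pos m with rfl | hm
    · simpa using (hb1 0).trans ((le_div_iff₀ hlam).2 (by linarith [add_one_le_exp lam]))
    · simpa [Icc_eq_empty_of_lt hm] using hC
  | succ n ih =>
    rcases le_or_gt m (n + 1) with hmn | hmn
    · have htail : ∀ k ∈ Icc m n, b k * exp (-lam * ∑ j ∈ Icc (k + 1) (n + 1), b j)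
          = exp (-lam * b (n + 1)) * (b k * exp (-lam * ∑ j ∈ Icc (k + 1) n, b j)) := by
        intro k hk
        rw [sum_Icc_succ_top (by linarith [(mem_Icc.1 hk).2]), mul_add, exp_add]
        ring
      rw [sum_Icc_succ_top hmn, sum_congr rfl htail, ← mul_sum,
        Icc_eq_empty_of_lt (Nat.lt_succ_self (n + 1)), sum_empty, mul_zero, exp_zero, mul_one]
      linarith [mul_le_mul_of_nonneg_left ih (exp_pos (-lam * b (n + 1))).le,
        add_exp_neg_mul_mul_le hlam (hb0 (n + 1)) (hb1 (n + 1))]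
    · simpa [Icc_eq_empty_of_lt hmn] using hC

lemma le_mul_exp_sum_of_le_mul_exp {lam : ℝ} {w : ℕ → ℝ} {m : ℕ}
    (hw : ∀ j, m ≤ j → w j ≤ w (j + 1) * exp (lam * b (j + 1))) {k n : ℕ} (hmk : m ≤ k)
    (hkn : k ≤ n) : w k ≤ w n * exp (lam * ∑ j ∈ Icc (k + 1) n, b j) := by
  induction n, hkn using Nat.le_induction with
  | base => simp
  | succ n hkn ih =>
    calc w k ≤ w n * exp (lam * ∑ j ∈ Icc (k + 1) n, b j) := ih
      _ ≤ w (n + 1) * exp (lam * b (n + 1)) * exp (lam * ∑ j ∈ Icc (k + 1) n, b j) :=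
        mul_le_mul_of_nonneg_right (hw n (hmk.trans hkn)) (exp_pos _).le
      _ = w (n + 1) * exp (lam * ∑ j ∈ Icc (k + 1) (n + 1), b j) := by
        rw [sum_Icc_succ_top (by omega), mul_add, exp_add]; ring

lemma sum_exp_neg_tail_mul_le {q : ℝ} (hq : 0 < q) (hb0 : ∀ j, 0 ≤ b j)
    (hb1 : ∀ j, b j ≤ 1) {w : ℕ → ℝ} {m n : ℕ} (hwn : 0 ≤ w n)
    (hw : ∀ j, m ≤ j → w j ≤ w (j + 1) * exp (q / 2 * b (j + 1))) :
    ∑ k ∈ Icc m n, exp (-q * ∑ j ∈ Icc (k + 1) n, b j) * b k * w k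
      ≤ 2 * exp (q / 2) / q * w n := by
  calc ∑ k ∈ Icc m n, exp (-q * ∑ j ∈ Icc (k + 1) n, b j) * b k * w k
      ≤ ∑ k ∈ Icc m n, w n * (b k * exp (-(q / 2) * ∑ j ∈ Icc (k + 1) n, b j)) := by
        refine sum_le_sum fun k hk => ?_
        obtain ⟨hmk, hkn⟩ := mem_Icc.1 hk
        set S := ∑ j ∈ Icc (k + 1) n, b j
        calc exp (-q * S) * b k * w k ≤ exp (-q * S) * b k * (w n * exp (q / 2 * S)) :=
              mul_le_mul_of_nonneg_left (le_mul_exp_sum_of_le_mul_exp hw hmk hkn)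
                (mul_nonneg (exp_pos _).le (hb0 k))
          _ = w n * (b k * exp (-(q / 2) * S)) := by
              rw [mul_assoc, mul_comm (exp _), mul_assoc, mul_assoc, ← exp_add]; ring_nf
    _ = w n * ∑ k ∈ Icc m n, b k * exp (-(q / 2) * ∑ j ∈ Icc (k + 1) n, b j) := by
        rw [mul_sum]
    _ ≤ w n * (exp (q / 2) / (q / 2)) :=
        mul_le_mul_of_nonneg_left (sum_mul_exp_neg_tail_le (by positivity) hb0 hb1 m n) hwn
    _ = 2 * exp (q / 2) / q * w n := by field_simp

end ExponentialSums

lemma exp_neg_mul_sum_steps_le {α β q : ℝ} (hβα : β < α) (hq : 0 ≤ q) {n0 j : ℕ}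
    (hn0 : (2 : ℝ) ^ (1 / (α - β)) ≤ n0) (hj : n0 ≤ j) :
    exp (-q * ∑ i ∈ Icc (n0 + 1) j, steps α i)
      ≤ exp (-q * ∑ i ∈ Icc (n0 + 1) (j + 1), steps α i) * exp (q / 2 * steps β (j + 1)) := by
  have hjR : (n0 : ℝ) ≤ j := by exact_mod_cast hj
  have hsteps := two_mul_steps_le_steps hβα (j := j + 1) (by push_cast; linarith)
  rw [sum_Icc_succ_top (by omega), ← exp_add, exp_le_exp]
  nlinarith

lemma BetaModerateFrom.steps_div_mul_le {α β q2 : ℝ} {u : ℕ → ℝ} {k0 : ℕ}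
    (hmod : BetaModerateFrom α β q2 u k0) (hu : ∀ k, 0 < u k) {k : ℕ} (hk : k0 ≤ k) :
    steps α k / steps β k * u k
      ≤ steps α (k + 1) / steps β (k + 1) * u (k + 1) * exp (q2 / 2 * steps β (k + 2)) := by
  have hratio := (div_le_iff₀ (hu (k + 1))).1 (hmod k hk)
  have := steps_pos α k
  have := steps_pos β k
  have := steps_pos α (k + 1)
  have := steps_pos β (k + 1)
  calc steps α k / steps β k * u k
      ≤ steps α k / steps β k * (steps α (k + 1) / steps α k * (steps β k / steps β (k + 1)) *
          exp (q2 / 2 * steps β (k + 2)) * u (k + 1)) :=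
        mul_le_mul_of_nonneg_left hratio (by positivity)
    _ = steps α (k + 1) / steps β (k + 1) * u (k + 1) * exp (q2 / 2 * steps β (k + 2)) := by
        field_simp

lemma rpow_neg_le_rpow_neg_add_one_mul_exp {x a : ℝ} (hx : 0 < x) (ha : 0 ≤ a) :
    x ^ (-a) ≤ (x + 1) ^ (-a) * exp (a / x) := by
  have hlog : log (x + 1) - log x ≤ 1 / x := by
    rw [← log_div (by positivity) hx.ne']
    have : (x + 1) / x - 1 = 1 / x := by field_simp; ring
    linarith [log_le_sub_one_of_pos (show 0 < (x + 1) / x by positivity)]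
  rw [rpow_def_of_pos hx, rpow_def_of_pos (by positivity), ← exp_add, exp_le_exp]
  have := mul_le_mul_of_nonneg_left hlog ha
  rw [mul_one_div] at this
  linarith

/-- Beyond the threshold, `(x + 2)^{1-β} ≥ 3α/q`, and `x ≥ (x + 2)/3`. -/
lemma div_le_mul_rpow_neg_of_rpow_le {α β q x : ℝ} (hα : 0 ≤ α) (hβ : β < 1) (hq : 0 < q)
    (hx : 1 ≤ x) (h : (3 * α / q) ^ (1 / (1 - β)) ≤ x + 2) : α / x ≤ q * (x + 2) ^ (-β) := by
  have hpow : 3 * α / q ≤ (x + 2) ^ (1 - β) :=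
    (rpow_inv_le_iff_of_pos (by positivity) (by positivity) (by linarith)).1
      (by rwa [← one_div])
  have hsplit : (x + 2) ^ (1 - β) = (x + 2) * (x + 2) ^ (-β) := by
    rw [sub_eq_add_neg, rpow_add (by positivity), rpow_one]
  have ht : 0 < (x + 2) ^ (-β) := by positivity
  rw [hsplit, div_le_iff₀ hq] at hpow
  rw [div_le_iff₀ (by positivity)]
  nlinarith

lemma eps_le_eps_succ_mul_exp {α β q c B : ℝ} (hα : 0 ≤ α) (hβ : β < 1) (hq : 0 < q)
    (hc : 0 ≤ c) (hB : 0 < B) {j : ℕ} (hj : 1 ≤ j)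
    (h : (3 * α / q) ^ (1 / (1 - β)) ≤ (j : ℝ) + 2) :
    c * (j : ℝ) ^ (-(α / 2)) * sqrt (log (B * j))
      ≤ c * ((j + 1 : ℕ) : ℝ) ^ (-(α / 2)) * sqrt (log (B * (j + 1 : ℕ)))
          * exp (q / 2 * steps β (j + 1)) := by
  have hjR : (1 : ℝ) ≤ j := by exact_mod_cast hj
  have hsteps : steps β (j + 1) = ((j : ℝ) + 2) ^ (-β) := by
    rw [steps]; push_cast; ring_nf
  have hexp : exp (α / 2 / j) ≤ exp (q / 2 * steps β (j + 1)) := by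
    rw [exp_le_exp, hsteps, div_right_comm]
    linarith [div_le_mul_rpow_neg_of_rpow_le hα hβ hq hjR h]
  have hrpow : (j : ℝ) ^ (-(α / 2)) ≤ ((j : ℝ) + 1) ^ (-(α / 2)) * exp (q / 2 * steps β (j + 1)) :=
    (rpow_neg_le_rpow_neg_add_one_mul_exp (by positivity) (by positivity)).trans
      (mul_le_mul_of_nonneg_left hexp (by positivity))
  have hsqrt : sqrt (log (B * j)) ≤ sqrt (log (B * ((j : ℝ) + 1))) :=
    sqrt_le_sqrt (log_le_log (by positivity) (by nlinarith))
  push_cast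
  calc c * (j : ℝ) ^ (-(α / 2)) * sqrt (log (B * j))
      ≤ c * (((j : ℝ) + 1) ^ (-(α / 2)) * exp (q / 2 * steps β (j + 1)))
          * sqrt (log (B * ((j : ℝ) + 1))) := by gcongr
    _ = _ := by ring

theorem stmt15_general (α β q1 q2 c B : ℝ)
    (hβ : 0 < β) (hβα : β < α) (hα : α < 1)
    (hq1 : 0 < q1) (hq2 : 0 < q2) (hc : 0 < c) (hB : 1 ≤ B)
    (n0 n : ℕ) :
    (((2 : ℝ) ^ (1 / (α - β)) ≤ (n0 : ℝ)) →
      ∑ k ∈ Finset.Icc (n0 + 1) n,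
          Real.exp (-q2 * ∑ j ∈ Finset.Icc (k + 1) n, steps β j) * steps β k *
            Real.exp (-q1 * ∑ j ∈ Finset.Icc (n0 + 1) k, steps α j)
        ≤ 2 * Real.exp (min q1 q2 / 2) / min q1 q2 *
            Real.exp (-(min q1 q2) * ∑ j ∈ Finset.Icc (n0 + 1) n, steps α j)) ∧
    (∀ u : ℕ → ℝ, (∀ k, 0 < u k) → BetaModerateFrom α β q2 u n0 →
      ∑ k ∈ Finset.Icc (n0 + 1) n,
          Real.exp (-q2 * ∑ j ∈ Finset.Icc (k + 1) n, steps β j) * steps β k *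
            (steps α (k - 1) / steps β (k - 1) * u (k - 1))
        ≤ 2 * Real.exp (q2 / 2) / q2 * (steps α (n - 1) / steps β (n - 1) * u (n - 1))) ∧
    (((3 * α / q2) ^ (1 / (1 - β)) - 2 ≤ (n0 : ℝ)) →
      ∑ k ∈ Finset.Icc (n0 + 1) n,
          Real.exp (-q2 * ∑ j ∈ Finset.Icc (k + 1) n, steps β j) * steps β k *
            (c * ((k : ℝ)) ^ (-(α / 2)) * Real.sqrt (Real.log (B * (k : ℝ))))
        ≤ 2 * Real.exp (q2 / 2) / q2 *
            (c * ((n : ℝ)) ^ (-(α / 2)) * Real.sqrt (Real.log (B * (n : ℝ))))) := by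
  have hα0 : 0 < α := hβ.trans hβα
  have hb0 : ∀ j, 0 ≤ steps β j := fun j => (steps_pos β j).le
  have hb1 : ∀ j, steps β j ≤ 1 := steps_le_one hβ.le
  refine ⟨fun hn0 => ?_, fun u hu hmod => ?_, fun hn0 => ?_⟩
  · have hqm : 0 < min q1 q2 := lt_min hq1 hq2
    calc _ ≤ ∑ k ∈ Icc (n0 + 1) n, exp (-min q1 q2 * ∑ j ∈ Icc (k + 1) n, steps β j) *
          steps β k * exp (-min q1 q2 * ∑ j ∈ Icc (n0 + 1) k, steps α j) := by
          refine sum_le_sum fun k _ => ?_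
          have := sum_nonneg (s := Icc (k + 1) n) fun j _ => hb0 j
          have := sum_nonneg (s := Icc (n0 + 1) k) fun j _ => (steps_pos α j).le
          have := hb0 k
          gcongr
          exacts [min_le_right _ _, min_le_left _ _]
      _ ≤ _ := sum_exp_neg_tail_mul_le hqm hb0 hb1 (exp_pos _).le
          fun j hj => exp_neg_mul_sum_steps_le hβα hqm.le hn0 (by omega)
  · refine sum_exp_neg_tail_mul_le hq2 hb0 hb1
      (mul_nonneg (div_nonneg (steps_pos α _).le (steps_pos β _).le) (hu _).le) ?_
    intro j hj
    obtain ⟨k, rfl⟩ : ∃ k, j = k + 1 := ⟨j - 1, by omega⟩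
    simpa only [Nat.add_sub_cancel] using hmod.steps_div_mul_le hu (k := k) (by omega)
  · refine sum_exp_neg_tail_mul_le hq2 hb0 hb1 (by positivity) fun j hj => ?_
    have hjR : (n0 : ℝ) + 1 ≤ j := by exact_mod_cast hj
    exact eps_le_eps_succ_mul_exp hα0.le (by linarith) hq2 hc.le (by linarith) (by omega)
      (by linarith)

/-- Lemma `IntComputation`.
Let `α_j = (j+1)^{−α}`, `β_j = (j+1)^{−β}` with `1 > α > β > 0`, `q₁, q₂ > 0`,
`q_min = min {q₁, q₂}`, and `ε^{(θ)}_n = c (n+1)^{−α/2} √(ln (B(n+1)))` with `c > 0`, `B ≥ 1`.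
Then, for `n ≥ n₀ + 1`:
(1) if `n₀ ≥ 2^{1/(α−β)}`, then
  `Σ_{k=n₀+1}^n e^{−q₂ Σ_{j=k+1}^n β_j} β_k e^{−q₁ Σ_{j=n₀+1}^k α_j}
     ≤ (2 e^{q_min/2}/q_min) e^{−q_min Σ_{j=n₀+1}^n α_j}`;
(2) for any positive `u` that is `β`-moderate from `n₀` onwards,
  `Σ_{k=n₀+1}^n e^{−q₂ Σ_{j=k+1}^n β_j} β_k (α_{k−1}/β_{k−1}) u_{k−1}
     ≤ (2 e^{q₂/2}/q₂) (α_{n−1}/β_{n−1}) u_{n−1}`;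
(3) if `n₀ ≥ (3α/q₂)^{1/(1−β)} − 2`, then
  `Σ_{k=n₀+1}^n e^{−q₂ Σ_{j=k+1}^n β_j} β_k ε^{(θ)}_{k−1} ≤ (2 e^{q₂/2}/q₂) ε^{(θ)}_{n−1}`. -/
theorem stmt15 (α β q1 q2 c B : ℝ)
    (hβ : 0 < β) (hβα : β < α) (hα : α < 1)
    (hq1 : 0 < q1) (hq2 : 0 < q2) (hc : 0 < c) (hB : 1 ≤ B)
    (n0 n : ℕ) (hn : n0 + 1 ≤ n) :
    (((2 : ℝ) ^ (1 / (α - β)) ≤ (n0 : ℝ)) →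
      ∑ k ∈ Finset.Icc (n0 + 1) n,
          Real.exp (-q2 * ∑ j ∈ Finset.Icc (k + 1) n, steps β j) * steps β k *
            Real.exp (-q1 * ∑ j ∈ Finset.Icc (n0 + 1) k, steps α j)
        ≤ 2 * Real.exp (min q1 q2 / 2) / min q1 q2 *
            Real.exp (-(min q1 q2) * ∑ j ∈ Finset.Icc (n0 + 1) n, steps α j)) ∧
    (∀ u : ℕ → ℝ, (∀ k, 0 < u k) → BetaModerateFrom α β q2 u n0 →
      ∑ k ∈ Finset.Icc (n0 + 1) n,
          Real.exp (-q2 * ∑ j ∈ Finset.Icc (k + 1) n, steps β j) * steps β k *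
            (steps α (k - 1) / steps β (k - 1) * u (k - 1))
        ≤ 2 * Real.exp (q2 / 2) / q2 * (steps α (n - 1) / steps β (n - 1) * u (n - 1))) ∧
    (((3 * α / q2) ^ (1 / (1 - β)) - 2 ≤ (n0 : ℝ)) →
      ∑ k ∈ Finset.Icc (n0 + 1) n,
          Real.exp (-q2 * ∑ j ∈ Finset.Icc (k + 1) n, steps β j) * steps β k *
            (c * ((k : ℝ)) ^ (-(α / 2)) * Real.sqrt (Real.log (B * (k : ℝ))))
        ≤ 2 * Real.exp (q2 / 2) / q2 *
            (c * ((n : ℝ)) ^ (-(α / 2)) * Real.sqrt (Real.log (B * (n : ℝ))))) :=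
  stmt15_general α β q1 q2 c B hβ hβα hα hq1 hq2 hc hB n0 n
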